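/- For a binary tree T with nodes labeled in infix order, the partition π' of label sets of maximal left branches and the partition π'' of label sets of maximal right branches are both noncrossing partitions, and π'' is the right Kreweras complement of π'. -/

import Mathlib

/-- Binary trees. -/
inductive BT : Type
  | leaf : BT
  | node : BT → BT → BT
  deriving DecidableEq

namespace BT

/-- Positions of the nodes of a binary tree in infix (in-order) order. -/
def inorder : BT → List (List Bool)
  | leaf => []
  | node l r =>
      (inorder l).map (List.cons false) ++ [[]] ++ (inorder r).map (List.cons true)

/-- Remove the trailing occurrences of `b` from a path. -/
def stripTrail (b : Bool) (p : List Bool) : List Bool :=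
  (p.reverse.dropWhile (· == b)).reverse

/-- Labels `i, j` lie in the same block of the partition into maximal left
branches (`b = false`), resp. maximal right branches (`b = true`). -/
def sameBranch (t : BT) (b : Bool) (i j : Fin (inorder t).length) : Prop :=
  stripTrail b ((inorder t).get i) = stripTrail b ((inorder t).get j)

/-- The permutation (as a function on labels) whose cycles are the blocks of
the partition into maximal left (`b = false`) or right (`b = true`) branches,
each block arranged as a cycle in increasing order. -/
def branchNext (t : BT) (b : Bool) (x : Fin (inorder t).length) :
    Fin (inorder t).length :=
  let B : Finset (Fin (inorder t).length) :=
    Finset.univ.filter fun j =>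
      stripTrail b ((inorder t).get j) = stripTrail b ((inorder t).get x)
  if h : (B.filter fun j => x < j).Nonempty then (B.filter fun j => x < j).min' h
  else if h2 : B.Nonempty then B.min' h2 else x


/- ===== aux ===== -/

/-- Linear order on paths: `false < [] < true` at each step. -/
def plt : List Bool → List Bool → Bool
  | [], [] => false
  | [], b :: _ => b
  | a :: _, [] => !a
  | a :: p, b :: q => if a = b then plt p q else (!a && b)

@[simp] lemma plt_nil_nil : plt [] [] = false := rfl
@[simp] lemma plt_nil_cons (b : Bool) (q : List Bool) : plt [] (b :: q) = b := rfl
@[simp] lemma plt_cons_nil (a : Bool) (p : List Bool) : plt (a :: p) [] = !a := rfl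
lemma plt_cons_cons (a b : Bool) (p q : List Bool) :
    plt (a :: p) (b :: q) = if a = b then plt p q else (!a && b) := rfl
@[simp] lemma plt_cons_same (a : Bool) (p q : List Bool) :
    plt (a :: p) (a :: q) = plt p q := by simp [plt_cons_cons]

lemma plt_irrefl (p : List Bool) : plt p p = false := by
  induction p with
  | nil => rfl
  | cons a p ih => simpa using ih

lemma plt_asymm {p q : List Bool} (h1 : plt p q = true) (h2 : plt q p = true) : False := by
  induction p generalizing q with
  | nil =>
    cases q with
    | nil => simp at h1
    | cons b q => cases b <;> simp_all
  | cons a p ih =>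
    cases q with
    | nil => cases a <;> simp_all
    | cons b q =>
      by_cases hab : a = b
      · subst hab; simp at h1 h2; exact ih h1 h2
      · rw [plt_cons_cons, if_neg hab] at h1
        rw [plt_cons_cons, if_neg (Ne.symm hab)] at h2
        cases a <;> cases b <;> simp_all
  
lemma plt_total (p q : List Bool) : p = q ∨ plt p q = true ∨ plt q p = true := by
  induction p generalizing q with
  | nil =>
    cases q with
    | nil => left; rfl
    | cons b q => cases b <;> simp
  | cons a p ih =>
    cases q with
    | nil => cases a <;> simp
    | cons b q =>
      by_cases hab : a = b
      · subst hab
        rcases ih q with h | h | h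
        · left; rw [h]
        · right; left; simpa using h
        · right; right; simpa using h
      · rw [plt_cons_cons, if_neg hab, plt_cons_cons, if_neg (Ne.symm hab)]
        cases a <;> cases b <;> simp_all

lemma plt_append_left (u x y : List Bool) : plt (u ++ x) (u ++ y) = plt x y := by
  induction u with
  | nil => rfl
  | cons a u ih => simpa using ih

lemma plt_append_cons_false (u w : List Bool) : plt (u ++ false :: w) u = true := by
  have := plt_append_left u (false :: w) []
  simpa using this

lemma plt_append_cons_true (u w : List Bool) : plt u (u ++ true :: w) = true := by
  have := plt_append_left u [] (true :: w)
  simpa using this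

lemma plt_repT (a b : ℕ) :
    plt (List.replicate a true) (List.replicate b true) = decide (a < b) := by
  induction a generalizing b with
  | zero => cases b <;> simp [List.replicate_succ]
  | succ a ih =>
    cases b with
    | zero => simp [List.replicate_succ]
    | succ b => simp [List.replicate_succ, ih]

lemma plt_repF (a b : ℕ) :
    plt (List.replicate a false) (List.replicate b false) = decide (b < a) := by
  induction a generalizing b with
  | zero => cases b <;> simp [List.replicate_succ]
  | succ a ih =>
    cases b with
    | zero => simp [List.replicate_succ]
    | succ b => simp [List.replicate_succ, ih]

lemma L1 (u w y : List Bool) (h1 : plt (u ++ false :: w) y = true) (h2 : plt y u = true) :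
    ∃ tail, y = u ++ false :: tail := by
  induction u generalizing y with
  | nil =>
    cases y with
    | nil => simp at h2
    | cons c y =>
      cases c
      · exact ⟨y, rfl⟩
      · simp at h2
  | cons a u ih =>
    cases y with
    | nil =>
      cases a <;> simp_all
    | cons c y =>
      by_cases hac : a = c
      · subst hac
        simp only [List.cons_append, plt_cons_same] at h1 h2
        obtain ⟨tail, ht⟩ := ih _ h1 h2
        exact ⟨tail, by rw [ht]; rfl⟩
      · rw [List.cons_append, plt_cons_cons, if_neg hac] at h1
        rw [plt_cons_cons, if_neg (Ne.symm hac)] at h2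
        cases a <;> cases c <;> simp_all

lemma L1' (u w y : List Bool) (h1 : plt u y = true) (h2 : plt y (u ++ true :: w) = true) :
    ∃ tail, y = u ++ true :: tail := by
  induction u generalizing y with
  | nil =>
    cases y with
    | nil => simp at h1
    | cons c y =>
      cases c
      · simp at h1
      · exact ⟨y, rfl⟩
  | cons a u ih =>
    cases y with
    | nil =>
      cases a <;> simp_all
    | cons c y =>
      by_cases hac : a = c
      · subst hac
        simp only [List.cons_append, plt_cons_same] at h1 h2
        obtain ⟨tail, ht⟩ := ih _ h1 h2
        exact ⟨tail, by rw [ht]; rfl⟩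
      · rw [plt_cons_cons, if_neg hac] at h1
        rw [List.cons_append, plt_cons_cons, if_neg (Ne.symm hac)] at h2
        cases a <;> cases c <;> simp_all

lemma LT_prefix (a : ℕ) (z : List Bool) (h : plt (List.replicate a true) z = true) :
    ∃ z', z = List.replicate a true ++ true :: z' := by
  induction a generalizing z with
  | zero =>
    cases z with
    | nil => simp at h
    | cons c z =>
      cases c
      · simp at h
      · exact ⟨z, rfl⟩
  | succ a ih =>
    cases z with
    | nil => simp [List.replicate_succ] at h
    | cons c z =>
      cases c
      · simp [List.replicate_succ, plt_cons_cons] at h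
      · rw [List.replicate_succ, plt_cons_same] at h
        obtain ⟨z', hz⟩ := ih z h
        exact ⟨z', by rw [List.replicate_succ, hz]; rfl⟩

lemma L2 (c v : List Bool) (m1 m2 k : ℕ) (hc : c = v ++ [false])
    (h1 : plt (c ++ List.replicate m1 true) (List.replicate k true) = true)
    (h2 : plt (List.replicate k true) (c ++ List.replicate m2 true) = true) : False := by
  induction c generalizing v k with
  | nil => simpa using congrArg List.length hc
  | cons a c ih =>
    cases a
    · -- c starts with false : h2 impossible
      cases k with
      | zero => simp at h2
      | succ k => simp [List.replicate_succ, plt_cons_cons] at h2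
    · -- c starts with true
      cases k with
      | zero => simp at h1
      | succ k =>
        cases v with
        | nil => simp at hc
        | cons b v =>
          obtain ⟨hb, hcv⟩ : b = true ∧ c = v ++ [false] := by
            constructor
            · exact (List.cons_eq_cons.mp hc).1.symm
            · exact (List.cons_eq_cons.mp hc).2
          rw [List.replicate_succ, List.cons_append, plt_cons_same] at h1 h2
          exact ih v k hcv h1 h2


/- ===== stripTrail lemmas ===== -/

lemma dropWhile_replicate_append (b : Bool) (m : ℕ) (l : List Bool) :
    List.dropWhile (· == b) (List.replicate m b ++ l) = List.dropWhile (· == b) l := by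
  induction m with
  | zero => rfl
  | succ m ih => simp [List.replicate_succ, List.dropWhile_cons, ih]

lemma strip_append_replicate (b : Bool) (u : List Bool) (m : ℕ) :
    stripTrail b (u ++ List.replicate m b) = stripTrail b u := by
  unfold stripTrail
  rw [List.reverse_append, List.reverse_replicate, dropWhile_replicate_append]

lemma strip_append_not (b : Bool) (u : List Bool) :
    stripTrail b (u ++ [!b]) = u ++ [!b] := by
  unfold stripTrail
  rw [List.reverse_append]
  simp [List.dropWhile_cons]

lemma dropWhile_head_not {α : Type*} (p : α → Bool) (l : List α) (x : α) (xs : List α)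
    (h : List.dropWhile p l = x :: xs) : p x = false := by
  induction l with
  | nil => simp at h
  | cons a l ih =>
    rw [List.dropWhile_cons] at h
    by_cases hpa : p a = true
    · rw [if_pos hpa] at h; exact ih h
    · rw [if_neg hpa] at h
      obtain ⟨rfl, -⟩ := List.cons_eq_cons.mp h
      simpa using hpa

lemma strip_decomp (b : Bool) (p : List Bool) :
    ∃ m, p = stripTrail b p ++ List.replicate m b := by
  refine ⟨(p.reverse.takeWhile (· == b)).length, ?_⟩
  have ht : p.reverse.takeWhile (· == b) =
      List.replicate (p.reverse.takeWhile (· == b)).length b := by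
    apply List.eq_replicate_of_mem
    intro x hx
    simpa using List.mem_takeWhile_imp hx
  conv_lhs => rw [← p.reverse_reverse, ← List.takeWhile_append_dropWhile (p := (· == b)) (l := p.reverse)]
  rw [List.reverse_append, ht, List.reverse_replicate]
  simp [stripTrail]

lemma strip_form (b : Bool) (p : List Bool) :
    stripTrail b p = [] ∨ ∃ u, stripTrail b p = u ++ [!b] := by
  unfold stripTrail
  cases hd : List.dropWhile (· == b) p.reverse with
  | nil => left; rfl
  | cons x xs =>
    right
    have hx : x = !b := by
      have := dropWhile_head_not _ _ _ _ hd
      cases b <;> cases x <;> simp_all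
    refine ⟨xs.reverse, ?_⟩
    subst hx
    simp

lemma strip_idem (b : Bool) (p : List Bool) :
    stripTrail b (stripTrail b p) = stripTrail b p := by
  rcases strip_form b p with h | ⟨u, h⟩
  · rw [h]; rfl
  · rw [h, strip_append_not]

lemma strip_key (b : Bool) (u tail : List Bool) :
    stripTrail b (u ++ b :: tail) = stripTrail b u ∨
      ∃ v, stripTrail b (u ++ b :: tail) = u ++ b :: (v ++ [!b]) := by
  obtain ⟨m, hm⟩ := strip_decomp b tail
  rcases strip_form b tail with h0 | ⟨v, hv⟩
  · left
    rw [h0] at hm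
    simp only [List.nil_append] at hm
    rw [hm]
    have : u ++ b :: List.replicate m b = u ++ List.replicate (m + 1) b := by
      simp [List.replicate_succ]
    rw [this, strip_append_replicate]
  · right
    refine ⟨v, ?_⟩
    rw [hv] at hm
    rw [hm]
    have : u ++ b :: (v ++ [!b] ++ List.replicate m b) =
        (u ++ b :: (v ++ [!b])) ++ List.replicate m b := by simp
    rw [this, strip_append_replicate]
    have : u ++ b :: (v ++ [!b]) = (u ++ b :: v) ++ [!b] := by simp
    rw [this, strip_append_not]

/- ===== tree node lemmas ===== -/

def isNode : BT → List Bool → Bool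
  | leaf, _ => false
  | node _ _, [] => true
  | node l _, false :: p => isNode l p
  | node _ r, true :: p => isNode r p

def subtree : BT → List Bool → BT
  | t, [] => t
  | leaf, _ :: _ => leaf
  | node l _, false :: p => subtree l p
  | node _ r, true :: p => subtree r p

def lchain : BT → ℕ
  | leaf => 0
  | node l _ => lchain l + 1

@[simp] lemma isNode_leaf (p : List Bool) : isNode leaf p = false := by
  cases p with
  | nil => rfl
  | cons a p => cases a <;> rfl

lemma subtree_leaf (p : List Bool) : subtree leaf p = leaf := by
  cases p with
  | nil => rfl
  | cons a p => cases a <;> rfl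

lemma isNode_append (t : BT) (u v : List Bool) :
    isNode t (u ++ v) = isNode (subtree t u) v := by
  induction u generalizing t with
  | nil => cases t <;> rfl
  | cons a u ih =>
    cases t with
    | leaf => cases a <;> simp [subtree_leaf]
    | node l r => cases a <;> simp [isNode, subtree, ih]

lemma isNode_prefix (t : BT) (u v : List Bool) (h : isNode t (u ++ v) = true) :
    isNode t u = true := by
  induction u generalizing t with
  | nil =>
    cases t with
    | leaf => simp at h
    | node l r => rfl
  | cons a u ih =>
    cases t with
    | leaf => simp at h
    | node l r => cases a <;> exact ih _ h

lemma isNode_repF (u : BT) (m : ℕ) :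
    isNode u (List.replicate m false) = decide (m < lchain u) := by
  induction u generalizing m with
  | leaf => simp [lchain]
  | node l r ih =>
    cases m with
    | zero => simp [isNode, lchain]
    | succ m => simpa [List.replicate_succ, isNode, lchain, Nat.succ_lt_succ_iff] using ih m

lemma min_node (u : BT) (z : List Bool) (h : isNode u z = true) :
    z = List.replicate (lchain u - 1) false ∨
      plt (List.replicate (lchain u - 1) false) z = true := by
  induction u generalizing z with
  | leaf => simp at h
  | node l r ih =>
    have hl : lchain (node l r) - 1 = lchain l := by simp [lchain]
    rw [hl]
    cases z with
    | nil =>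
      cases hleaf : l with
      | leaf => left; simp [hleaf, lchain]
      | node a b =>
        right
        simp [lchain, List.replicate_succ]
    | cons c z =>
      cases c
      · have hz : isNode l z = true := h
        rcases ih z hz with h1 | h1
        · left
          have : 1 ≤ lchain l := by
            cases l with
            | leaf => simp at hz
            | node a b => simp [lchain]
          obtain ⟨m, hm⟩ : ∃ m, lchain l = m + 1 := ⟨lchain l - 1, by omega⟩
          rw [hm, List.replicate_succ, h1, hm]
          simp
        · right
          have : 1 ≤ lchain l := by
            cases l with
            | leaf => simp at hz
            | node a b => simp [lchain]
          obtain ⟨m, hm⟩ : ∃ m, lchain l = m + 1 := ⟨lchain l - 1, by omega⟩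
          rw [hm, List.replicate_succ]
          rw [hm] at h1
          simpa using h1
      · right
        cases hll : lchain l with
        | zero => simp
        | succ m => simp [List.replicate_succ, plt_cons_cons]

/- ===== inorder lemmas ===== -/

lemma mem_inorder (t : BT) (p : List Bool) : p ∈ inorder t ↔ isNode t p = true := by
  induction t generalizing p with
  | leaf => simp [inorder]
  | node l r ihl ihr =>
    simp only [inorder, List.mem_append, List.mem_map, List.mem_singleton]
    cases p with
    | nil => simp [isNode]
    | cons c p =>
      cases c
      · simp only [isNode]
        rw [← ihl p]
        constructor
        · rintro ((⟨a, ha, he⟩ | h) | ⟨a, ha, he⟩)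
          · obtain ⟨-, rfl⟩ := List.cons_eq_cons.mp he; exact ha
          · simp at h
          · simp at he
        · intro h; exact Or.inl (Or.inl ⟨p, h, rfl⟩)
      · simp only [isNode]
        rw [← ihr p]
        constructor
        · rintro ((⟨a, ha, he⟩ | h) | ⟨a, ha, he⟩)
          · simp at he
          · simp at h
          · obtain ⟨-, rfl⟩ := List.cons_eq_cons.mp he; exact ha
        · intro h; exact Or.inr ⟨p, h, rfl⟩

lemma pairwise_inorder (t : BT) : (inorder t).Pairwise (fun p q => plt p q = true) := by
  induction t with
  | leaf => simp [inorder]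
  | node l r ihl ihr =>
    rw [inorder, List.pairwise_append]
    refine ⟨?_, ihr.map _ (fun a b h => by simpa using h), ?_⟩
    · rw [List.pairwise_append]
      refine ⟨ihl.map _ (fun a b h => by simpa using h), by simp, ?_⟩
      intro x hx y hy
      obtain ⟨a, -, rfl⟩ := List.mem_map.mp hx
      simp only [List.mem_singleton] at hy
      subst hy
      simp
    · intro x hx y hy
      obtain ⟨c, -, rfl⟩ := List.mem_map.mp hy
      rcases List.mem_append.mp hx with h | h
      · obtain ⟨a, -, rfl⟩ := List.mem_map.mp h
        simp [plt_cons_cons]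
      · simp only [List.mem_singleton] at h
        subst h
        simp

/- ===== index lemmas ===== -/

lemma lt_iff_plt (t : BT) (i j : Fin (inorder t).length) :
    i < j ↔ plt ((inorder t).get i) ((inorder t).get j) = true := by
  constructor
  · intro h
    exact (List.pairwise_iff_get.mp (pairwise_inorder t)) i j h
  · intro h
    rcases lt_trichotomy i j with h1 | h1 | h1
    · exact h1
    · subst h1
      rw [plt_irrefl] at h
      simp at h
    · exact absurd h (by
        have := (List.pairwise_iff_get.mp (pairwise_inorder t)) j i h1
        intro hc
        exact plt_asymm hc this)

lemma get_inj (t : BT) (i j : Fin (inorder t).length)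
    (h : (inorder t).get i = (inorder t).get j) : i = j := by
  rcases lt_trichotomy i j with h1 | h1 | h1
  · rw [lt_iff_plt] at h1
    rw [h, plt_irrefl] at h1
    simp at h1
  · exact h1
  · rw [lt_iff_plt] at h1
    rw [h, plt_irrefl] at h1
    simp at h1

lemma le_of_plt_or_eq (t : BT) (i j : Fin (inorder t).length)
    (h : (inorder t).get i = (inorder t).get j ∨
      plt ((inorder t).get i) ((inorder t).get j) = true) : i ≤ j := by
  rcases h with h | h
  · exact le_of_eq (get_inj t i j h)
  · exact le_of_lt ((lt_iff_plt t i j).mpr h)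

lemma exists_idx (t : BT) (q : List Bool) (h : isNode t q = true) :
    ∃ i : Fin (inorder t).length, (inorder t).get i = q := by
  have hm : q ∈ inorder t := (mem_inorder t q).mpr h
  obtain ⟨i, hi⟩ := List.mem_iff_get.mp hm
  exact ⟨i, hi⟩

lemma isNode_get (t : BT) (i : Fin (inorder t).length) :
    isNode t ((inorder t).get i) = true :=
  (mem_inorder t _).mp (List.get_mem _ i)

/- ===== branchNext characterization ===== -/

lemma branchNext_eq_of (t : BT) (b : Bool) (x y : Fin (inorder t).length)
    (hmem : stripTrail b ((inorder t).get y) = stripTrail b ((inorder t).get x))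
    (h : (x < y ∧ ∀ z, stripTrail b ((inorder t).get z) = stripTrail b ((inorder t).get x) →
            x < z → y ≤ z)
       ∨ ((∀ z, stripTrail b ((inorder t).get z) = stripTrail b ((inorder t).get x) → z ≤ x) ∧
          ∀ z, stripTrail b ((inorder t).get z) = stripTrail b ((inorder t).get x) → y ≤ z)) :
    branchNext t b x = y := by
  rw [branchNext]
  rcases h with ⟨hxy, hmin⟩ | ⟨hall, hmin⟩
  · have hne : ((Finset.univ.filter fun j =>
        stripTrail b ((inorder t).get j) = stripTrail b ((inorder t).get x)).filter
          fun j => x < j).Nonempty := by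
      exact ⟨y, by
        simp only [Finset.mem_filter, Finset.mem_univ, true_and]
        exact ⟨hmem, hxy⟩⟩
    rw [dif_pos hne]
    apply le_antisymm
    · apply Finset.min'_le
      simp only [Finset.mem_filter, Finset.mem_univ, true_and]
      exact ⟨hmem, hxy⟩
    · apply Finset.le_min'
      intro z hz
      simp only [Finset.mem_filter, Finset.mem_univ, true_and] at hz
      exact hmin z hz.1 hz.2
  · have hne : ¬ ((Finset.univ.filter fun j =>
        stripTrail b ((inorder t).get j) = stripTrail b ((inorder t).get x)).filter
          fun j => x < j).Nonempty := by
      rintro ⟨z, hz⟩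
      simp only [Finset.mem_filter, Finset.mem_univ, true_and] at hz
      exact absurd hz.2 (not_lt.mpr (hall z hz.1))
    rw [dif_neg hne]
    have hne2 : (Finset.univ.filter fun j =>
        stripTrail b ((inorder t).get j) = stripTrail b ((inorder t).get x)).Nonempty :=
      ⟨x, by simp⟩
    rw [dif_pos hne2]
    apply le_antisymm
    · apply Finset.min'_le
      simp only [Finset.mem_filter, Finset.mem_univ, true_and]
      exact hmem
    · apply Finset.le_min'
      intro z hz
      simp only [Finset.mem_filter, Finset.mem_univ, true_and] at hz
      exact hmin z hz

/- ===== noncrossing ===== -/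

lemma part1 (t : BT) (b : Bool) (a b' c d : Fin (inorder t).length)
    (h1 : a < b') (h2 : b' < c) (h3 : c < d)
    (hac : sameBranch t b a c) (hbd : sameBranch t b b' d) : sameBranch t b a b' := by
  unfold sameBranch at *
  have g := (inorder t).get
  cases b
  · -- left branches
    set s := stripTrail false ((inorder t).get a) with hs
    obtain ⟨ja, hja⟩ := strip_decomp false ((inorder t).get a)
    obtain ⟨jc, hjc0⟩ := strip_decomp false ((inorder t).get c)
    rw [← hac] at hjc0
    rw [← hs] at hja
    have hac' : plt ((inorder t).get a) ((inorder t).get c) = true :=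
      (lt_iff_plt t a c).mp (h1.trans h2)
    have hjalt : jc < ja := by
      rw [hja, hjc0, plt_append_left, plt_repF] at hac'
      simpa using hac'
    have hsplit : (inorder t).get a =
        (s ++ List.replicate jc false) ++ false :: List.replicate (ja - jc - 1) false := by
      rw [hja]
      have hja' : ja = jc + (ja - jc - 1 + 1) := by omega
      rw [hja', List.replicate_add, List.replicate_succ]
      simp
    have hy1 : plt ((s ++ List.replicate jc false) ++
        false :: List.replicate (ja - jc - 1) false) ((inorder t).get b') = true := by
      rw [← hsplit]
      exact (lt_iff_plt t a b').mp h1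
    have hy2 : plt ((inorder t).get b') (s ++ List.replicate jc false) = true := by
      rw [← hjc0]
      exact (lt_iff_plt t b' c).mp h2
    obtain ⟨tail, htail⟩ := L1 _ _ _ hy1 hy2
    rcases strip_key false (s ++ List.replicate jc false) tail with h | ⟨v, h⟩
    · rw [← htail] at h
      rw [h, strip_append_replicate, hs, strip_idem]
    · exfalso
      rw [← htail] at h
      obtain ⟨md, hmd⟩ := strip_decomp false ((inorder t).get d)
      rw [← hbd, h] at hmd
      have hdc : plt ((inorder t).get d) ((inorder t).get c) = true := by
        rw [hmd, hjc0]
        have : (s ++ List.replicate jc false) ++ false :: (v ++ [!false]) ++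
            List.replicate md false = (s ++ List.replicate jc false) ++
            false :: ((v ++ [!false]) ++ List.replicate md false) := by simp
        rw [this]
        exact plt_append_cons_false _ _
      exact plt_asymm ((lt_iff_plt t c d).mp h3) hdc
  · -- right branches
    set s := stripTrail true ((inorder t).get a) with hs
    obtain ⟨ja, hja⟩ := strip_decomp true ((inorder t).get a)
    obtain ⟨jc, hjc0⟩ := strip_decomp true ((inorder t).get c)
    rw [← hac] at hjc0
    rw [← hs] at hja
    have hac' : plt ((inorder t).get a) ((inorder t).get c) = true :=
      (lt_iff_plt t a c).mp (h1.trans h2)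
    have hjalt : ja < jc := by
      rw [hja, hjc0, plt_append_left, plt_repT] at hac'
      simpa using hac'
    have hsplit : (inorder t).get c =
        (inorder t).get a ++ true :: List.replicate (jc - ja - 1) true := by
      rw [hja, hjc0]
      have hjc' : jc = ja + (jc - ja - 1 + 1) := by omega
      rw [hjc', List.replicate_add, List.replicate_succ]
      simp
    have hy1 : plt ((inorder t).get a) ((inorder t).get b') = true :=
      (lt_iff_plt t a b').mp h1
    have hy2 : plt ((inorder t).get b')
        ((inorder t).get a ++ true :: List.replicate (jc - ja - 1) true) = true := by
      rw [← hsplit]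
      exact (lt_iff_plt t b' c).mp h2
    obtain ⟨tail, htail⟩ := L1' _ _ _ hy1 hy2
    rcases strip_key true ((inorder t).get a) tail with h | ⟨v, h⟩
    · rw [← htail] at h
      rw [h]
    · exfalso
      rw [← htail] at h
      obtain ⟨m1, hm1⟩ := strip_decomp true ((inorder t).get b')
      rw [h] at hm1
      obtain ⟨m2, hm2⟩ := strip_decomp true ((inorder t).get d)
      rw [← hbd, h] at hm2
      have hb'c : plt ((v ++ [!true]) ++ List.replicate m1 true)
          (List.replicate (jc - ja - 1) true) = true := by
        have := (lt_iff_plt t b' c).mp h2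
        rw [hm1, hsplit] at this
        have he1 : (inorder t).get a ++ true :: (v ++ [!true]) ++ List.replicate m1 true =
            ((inorder t).get a ++ [true]) ++ ((v ++ [!true]) ++ List.replicate m1 true) := by
          simp
        have he2 : (inorder t).get a ++ true :: List.replicate (jc - ja - 1) true =
            ((inorder t).get a ++ [true]) ++ List.replicate (jc - ja - 1) true := by
          simp
        rwa [he1, he2, plt_append_left] at this
      have hcd : plt (List.replicate (jc - ja - 1) true)
          ((v ++ [!true]) ++ List.replicate m2 true) = true := by
        have := (lt_iff_plt t c d).mp h3
        rw [hm2, hsplit] at this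
        have he1 : (inorder t).get a ++ true :: (v ++ [!true]) ++ List.replicate m2 true =
            ((inorder t).get a ++ [true]) ++ ((v ++ [!true]) ++ List.replicate m2 true) := by
          simp
        have he2 : (inorder t).get a ++ true :: List.replicate (jc - ja - 1) true =
            ((inorder t).get a ++ [true]) ++ List.replicate (jc - ja - 1) true := by
          simp
        rwa [he1, he2, plt_append_left] at this
      exact L2 (v ++ [!true]) v m1 m2 (jc - ja - 1) (by simp) hb'c hcd

/- ===== finRotate helpers ===== -/

lemma finRotate_eq (n : ℕ) (i k : Fin n) (h : (k : ℕ) = ((i : ℕ) + 1) % n) :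
    finRotate n i = k := by
  cases n with
  | zero => exact i.elim0
  | succ n =>
    rw [finRotate_succ_apply]
    apply Fin.ext
    rw [h, Fin.add_def]
    show ((i : ℕ) + (1 : Fin (n+1)).val) % (n+1) = ((i : ℕ) + 1) % (n+1)
    rw [Fin.val_one', Nat.add_mod, Nat.mod_mod_of_dvd _ (dvd_refl (n+1))]
    conv_rhs => rw [Nat.add_mod]


lemma fin_succ_val (n : ℕ) (i k : Fin n) (hik : i < k) (hmin : ∀ z, i < z → k ≤ z) :
    (k : ℕ) = (i : ℕ) + 1 := by
  have h1 : (i : ℕ) + 1 ≤ (k : ℕ) := hik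
  have h2 : (i : ℕ) + 1 < n := by
    have := k.isLt
    omega
  have h3 := hmin ⟨(i : ℕ) + 1, h2⟩ (by simp [Fin.lt_def])
  rw [Fin.le_def] at h3
  simp at h3
  omega

/- ===== branchNext computations ===== -/

lemma bn_true_child (t : BT) (i j : Fin (inorder t).length)
    (hj : (inorder t).get j = (inorder t).get i ++ [true]) :
    branchNext t true i = j := by
  obtain ⟨a, ha⟩ := strip_decomp true ((inorder t).get i)
  set s := stripTrail true ((inorder t).get i) with hs
  have hj' : (inorder t).get j = s ++ List.replicate (a+1) true := by
    rw [hj]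
    conv_lhs => rw [ha]
    rw [List.append_assoc, ← List.replicate_succ']
  apply branchNext_eq_of
  · rw [hj', strip_append_replicate, hs]
    exact strip_idem _ _
  left
  constructor
  · rw [lt_iff_plt, hj]
    exact plt_append_cons_true _ []
  · intro z hz hiz
    obtain ⟨m, hm⟩ := strip_decomp true ((inorder t).get z)
    rw [hz, ← hs] at hm
    have ham : a < m := by
      have hp := (lt_iff_plt t i z).mp hiz
      rw [hm, ha, plt_append_left, plt_repT] at hp
      simpa using hp
    apply le_of_plt_or_eq
    rcases eq_or_lt_of_le (Nat.succ_le_of_lt ham) with he | hlt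
    · left
      rw [hj', hm, show a + 1 = m from he]
    · right
      rw [hj', hm, plt_append_left, plt_repT]
      simpa using hlt

lemma bn_true_top (t : BT) (i j : Fin (inorder t).length)
    (hR : ¬ isNode t ((inorder t).get i ++ [true]) = true)
    (hj : (inorder t).get j = stripTrail true ((inorder t).get i)) :
    branchNext t true i = j := by
  obtain ⟨a, ha⟩ := strip_decomp true ((inorder t).get i)
  set s := stripTrail true ((inorder t).get i) with hs
  have key : ∀ z : Fin (inorder t).length,
      stripTrail true ((inorder t).get z) = s →
      ∃ m, m ≤ a ∧ (inorder t).get z = s ++ List.replicate m true := by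
    intro z hz
    obtain ⟨m, hm⟩ := strip_decomp true ((inorder t).get z)
    rw [hz] at hm
    refine ⟨m, ?_, hm⟩
    by_contra hma
    push_neg at hma
    apply hR
    apply isNode_prefix t ((inorder t).get i ++ [true]) (List.replicate (m - a - 1) true)
    have heq : (inorder t).get i ++ [true] ++ List.replicate (m - a - 1) true =
        s ++ List.replicate m true := by
      rw [ha, List.append_assoc, List.append_assoc]
      congr 1
      rw [← List.append_assoc, ← List.replicate_succ', ← List.replicate_add,
        show a + 1 + (m - a - 1) = m by omega]
    rw [heq, ← hm]
    exact isNode_get t z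
  apply branchNext_eq_of
  · rw [hj, hs]
    exact strip_idem _ _
  right
  constructor
  · intro z hz
    obtain ⟨m, hma, hm⟩ := key z hz
    apply le_of_plt_or_eq
    rcases eq_or_lt_of_le hma with he | hlt
    · left
      rw [hm, he, ← ha]
    · right
      rw [hm, ha, plt_append_left, plt_repT]
      simpa using hlt
  · intro z hz
    obtain ⟨m, hma, hm⟩ := key z hz
    apply le_of_plt_or_eq
    cases m with
    | zero =>
      left
      rw [hj, hm]
      simp
    | succ m =>
      right
      rw [hj, hm, List.replicate_succ]
      exact plt_append_cons_true _ _

lemma bn_false_top (t : BT) (j k : Fin (inorder t).length)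
    (hq : stripTrail false ((inorder t).get j) = (inorder t).get j)
    (hk : (inorder t).get k = (inorder t).get j ++
      List.replicate (lchain (subtree t ((inorder t).get j)) - 1) false) :
    branchNext t false j = k := by
  have hL : 0 < lchain (subtree t ((inorder t).get j)) := by
    have h0 := isNode_get t j
    rw [show (inorder t).get j = (inorder t).get j ++ List.replicate 0 false by simp] at h0
    rw [isNode_append, isNode_repF] at h0
    simpa using h0
  have key : ∀ z : Fin (inorder t).length,
      stripTrail false ((inorder t).get z) = stripTrail false ((inorder t).get j) →
      ∃ m, m < lchain (subtree t ((inorder t).get j)) ∧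
        (inorder t).get z = (inorder t).get j ++ List.replicate m false := by
    intro z hz
    obtain ⟨m, hm⟩ := strip_decomp false ((inorder t).get z)
    rw [hz, hq] at hm
    refine ⟨m, ?_, hm⟩
    have h0 := isNode_get t z
    rw [hm, isNode_append, isNode_repF] at h0
    simpa using h0
  apply branchNext_eq_of
  · rw [hk, strip_append_replicate]
  right
  constructor
  · intro z hz
    obtain ⟨m, hmL, hm⟩ := key z hz
    apply le_of_plt_or_eq
    cases m with
    | zero =>
      left
      rw [hm]
      simp
    | succ m =>
      right
      rw [hm, List.replicate_succ]
      exact plt_append_cons_false _ _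
  · intro z hz
    obtain ⟨m, hmL, hm⟩ := key z hz
    apply le_of_plt_or_eq
    rcases eq_or_lt_of_le (Nat.le_sub_one_of_lt hmL) with he | hlt
    · left
      rw [hk, hm, he]
    · right
      rw [hk, hm, plt_append_left, plt_repF]
      simpa using hlt

lemma bn_false_parent (t : BT) (j k : Fin (inorder t).length) (u : List Bool)
    (hjq : (inorder t).get j = u ++ [false])
    (hk : (inorder t).get k = u) :
    branchNext t false j = k := by
  obtain ⟨e, he⟩ := strip_decomp false u
  set u0 := stripTrail false u with hu0
  have hj' : (inorder t).get j = u0 ++ List.replicate (e+1) false := by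
    rw [hjq]
    conv_lhs => rw [he]
    rw [List.append_assoc, ← List.replicate_succ']
  apply branchNext_eq_of
  · rw [hk, hj', strip_append_replicate, hu0, strip_idem]
  left
  constructor
  · rw [lt_iff_plt, hjq, hk]
    exact plt_append_cons_false _ []
  · intro z hz hjz
    obtain ⟨m, hm⟩ := strip_decomp false ((inorder t).get z)
    rw [hz, hj', strip_append_replicate, hu0, strip_idem, ← hu0] at hm
    have hme : m ≤ e := by
      have hp := (lt_iff_plt t j z).mp hjz
      rw [hm, hj', plt_append_left, plt_repF] at hp
      simp at hp
      omega
    apply le_of_plt_or_eq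
    rcases eq_or_lt_of_le hme with he2 | hlt
    · left
      rw [hk, hm, he, he2]
    · right
      rw [hk, hm]
      conv_lhs => rw [he]
      rw [plt_append_left, plt_repF]
      simpa using hlt

lemma subtree_nil (t : BT) : subtree t [] = t := by cases t <;> rfl

/- ===== successor lemmas ===== -/

lemma succ_case1 (t : BT) (i k : Fin (inorder t).length)
    (hk : (inorder t).get k = (inorder t).get i ++ [true] ++
      List.replicate (lchain (subtree t ((inorder t).get i ++ [true])) - 1) false) :
    (k : ℕ) = (i : ℕ) + 1 := by
  have hik : i < k := by
    rw [lt_iff_plt, hk, List.append_assoc]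
    exact plt_append_cons_true _ _
  apply fin_succ_val _ i k hik
  intro z hiz
  by_contra hzk
  push_neg at hzk
  have hp1 := (lt_iff_plt t i z).mp hiz
  have hp2 := (lt_iff_plt t z k).mp hzk
  obtain ⟨tail, htail⟩ := L1' ((inorder t).get i)
    (List.replicate (lchain (subtree t ((inorder t).get i ++ [true])) - 1) false)
    ((inorder t).get z) hp1 (by
      rw [show (inorder t).get i ++ true ::
          List.replicate (lchain (subtree t ((inorder t).get i ++ [true])) - 1) false =
          (inorder t).get i ++ [true] ++
          List.replicate (lchain (subtree t ((inorder t).get i ++ [true])) - 1) false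
          from by simp, ← hk]
      exact hp2)
  have hp2' : plt tail
      (List.replicate (lchain (subtree t ((inorder t).get i ++ [true])) - 1) false) = true := by
    have := hp2
    rw [htail, hk] at this
    rw [show (inorder t).get i ++ true :: tail =
      ((inorder t).get i ++ [true]) ++ tail by simp] at this
    rwa [plt_append_left] at this
  have htn : isNode (subtree t ((inorder t).get i ++ [true])) tail = true := by
    rw [← isNode_append]
    rw [show (inorder t).get i ++ [true] ++ tail = (inorder t).get z by rw [htail]; simp]
    exact isNode_get t z
  rcases min_node _ tail htn with h | h
  · rw [h, plt_irrefl] at hp2'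
    simp at hp2'
  · exact plt_asymm hp2' h

lemma succ_case2 (t : BT) (i k : Fin (inorder t).length) (u : List Bool) (a : ℕ)
    (hi : (inorder t).get i = (u ++ [false]) ++ List.replicate a true)
    (hR : ¬ isNode t ((inorder t).get i ++ [true]) = true)
    (hk : (inorder t).get k = u) :
    (k : ℕ) = (i : ℕ) + 1 := by
  have hik : i < k := by
    rw [lt_iff_plt, hi, hk, List.append_assoc]
    exact plt_append_cons_false _ _
  apply fin_succ_val _ i k hik
  intro z hiz
  by_contra hzk
  push_neg at hzk
  have hp1 := (lt_iff_plt t i z).mp hiz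
  have hp2 := (lt_iff_plt t z k).mp hzk
  obtain ⟨tail, htail⟩ := L1 u (List.replicate a true) ((inorder t).get z)
    (by
      rw [show u ++ false :: List.replicate a true =
        u ++ [false] ++ List.replicate a true from by simp, ← hi]
      exact hp1) (by rw [← hk]; exact hp2)
  have hp1' : plt (List.replicate a true) tail = true := by
    have h5 := hp1
    rw [hi, htail] at h5
    rw [show u ++ [false] ++ List.replicate a true =
      u ++ false :: List.replicate a true from by simp] at h5
    rwa [plt_append_left, plt_cons_same] at h5
  obtain ⟨z', hz'⟩ := LT_prefix a tail hp1'
  apply hR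
  apply isNode_prefix t _ z'
  rw [show (inorder t).get i ++ [true] ++ z' = (inorder t).get z by
    rw [htail, hz', hi]; simp]
  exact isNode_get t z

/- ===== Kreweras part ===== -/

lemma part2 (t : BT) (i : Fin (inorder t).length) :
    branchNext t false (branchNext t true i) = finRotate _ i := by
  have hn : 0 < (inorder t).length := i.pos
  by_cases hR : isNode t ((inorder t).get i ++ [true]) = true
  · -- i has a right child
    have hLpos : 0 < lchain (subtree t ((inorder t).get i ++ [true])) := by
      have h0 := hR
      rw [show (inorder t).get i ++ [true] =
        ((inorder t).get i ++ [true]) ++ List.replicate 0 false by simp] at h0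
      rw [isNode_append, isNode_repF] at h0
      simpa using h0
    have hnodek : isNode t ((inorder t).get i ++ [true] ++
        List.replicate (lchain (subtree t ((inorder t).get i ++ [true])) - 1) false) = true := by
      rw [isNode_append, isNode_repF, decide_eq_true_eq]
      omega
    obtain ⟨j, hj⟩ := exists_idx t _ hR
    obtain ⟨k, hk⟩ := exists_idx t _ hnodek
    rw [bn_true_child t i j hj]
    rw [bn_false_top t j k (by
        rw [hj]
        simpa using strip_append_not false ((inorder t).get i))
      (by rw [hj, hk])]
    have hkv := succ_case1 t i k hk
    refine (finRotate_eq _ i k ?_).symm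
    rw [hkv, Nat.mod_eq_of_lt]
    rw [← hkv]
    exact k.isLt
  · -- i has no right child
    obtain ⟨a, ha⟩ := strip_decomp true ((inorder t).get i)
    have hsN : isNode t (stripTrail true ((inorder t).get i)) = true := by
      apply isNode_prefix t _ (List.replicate a true)
      rw [← ha]
      exact isNode_get t i
    obtain ⟨j, hj⟩ := exists_idx t _ hsN
    rw [bn_true_top t i j hR hj]
    rcases strip_form true ((inorder t).get i) with hse | ⟨u, hsu⟩
    · -- stripped path is empty : i is the maximum
      have hpa : (inorder t).get i = List.replicate a true := by
        rw [ha, hse]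
        simp
      have himax : ∀ z, z ≤ i := by
        intro z
        by_contra hz
        push_neg at hz
        have hp := (lt_iff_plt t i z).mp hz
        rw [hpa] at hp
        obtain ⟨z', hz'⟩ := LT_prefix a _ hp
        apply hR
        apply isNode_prefix t _ z'
        rw [show (inorder t).get i ++ [true] ++ z' = (inorder t).get z by
          rw [hz', hpa]; simp]
        exact isNode_get t z
      have hival : (i : ℕ) = (inorder t).length - 1 := by
        have h1 := himax ⟨(inorder t).length - 1, by omega⟩
        rw [Fin.le_def] at h1
        simp at h1
        have := i.isLt
        omega
      have htN : isNode t ([] : List Bool) = true := by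
        apply isNode_prefix t [] ((inorder t).get i)
        exact isNode_get t i
      have hLt : 0 < lchain t := by
        have := htN
        rw [show ([] : List Bool) = List.replicate 0 false by simp, isNode_repF] at this
        simpa using this
      have hnodek : isNode t (List.replicate (lchain t - 1) false) = true := by
        rw [isNode_repF, decide_eq_true_eq]
        omega
      obtain ⟨k, hk⟩ := exists_idx t _ hnodek
      rw [bn_false_top t j k (by rw [hj, hse]; rfl)
        (by rw [hj, hse, hk]; simp [subtree_nil])]
      have hkmin : ∀ z, k ≤ z := by
        intro z
        apply le_of_plt_or_eq
        rcases min_node t ((inorder t).get z) (isNode_get t z) with h | h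
        · left
          rw [hk, h]
        · right
          rw [hk]
          exact h
      have hk0 : (k : ℕ) = 0 := by
        have h1 := hkmin ⟨0, hn⟩
        rw [Fin.le_def] at h1
        simpa using h1
      refine (finRotate_eq _ i k ?_).symm
      rw [hk0, hival, Nat.sub_add_cancel hn, Nat.mod_self]
    · -- stripped path ends with false : successor is its parent
      simp only [Bool.not_true] at hsu
      have huN : isNode t u = true := by
        apply isNode_prefix t u [false]
        rw [← hsu]
        exact hsN
      obtain ⟨k, hk⟩ := exists_idx t u huN
      rw [bn_false_parent t j k u (by rw [hj, hsu]) hk]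
      have hkv := succ_case2 t i k u a (by rw [ha, hsu]) hR hk
      refine (finRotate_eq _ i k ?_).symm
      rw [hkv, Nat.mod_eq_of_lt]
      rw [← hkv]
      exact k.isLt

/-- for a binary tree labeled in infix order, the partition `π'`
into maximal left branches and the partition `π''` into maximal right branches
are both noncrossing, and `π''` is the right Kreweras complement of `π'`, i.e.
`w_{π''} = w_{π'}⁻¹ ∘ (long cycle)`, equivalently
`w_{π'} ∘ w_{π''} = (0 1 … n-1)`. -/
theorem statement7 (t : BT) :
    (∀ b : Bool, ∀ a b' c d : Fin (inorder t).length, a < b' → b' < c → c < d →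
      sameBranch t b a c → sameBranch t b b' d → sameBranch t b a b') ∧
    ∀ i, branchNext t false (branchNext t true i) = finRotate _ i := by
  exact ⟨fun b a b' c d h1 h2 h3 hac hbd => part1 t b a b' c d h1 h2 h3 hac hbd,
    fun i => part2 t i⟩

end BT
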